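/- Let P(T) = Σ_{k≥1} π_k T^k ∈ 𝒪_E[[T]] be a power series with zero constant term such that π_1 ≠ 0 and π_1 ∈ 𝔪_E. Then there exists a unique power series A(T) = Σ_{k≥1} a_k T^k ∈ E[[T]] with zero constant term such that a_1 = 1 and A(P(T)) = π_1·A(T); moreover π_1^{k−1}·a_k ∈ 𝒪_E for every k ≥ 1. -/

import Mathlib

/-!
Comparing coefficients of `Tⁿ` in `A(P(T)) = π A(T)`, where `π = π₁`, gives
`(π - πⁿ) aₙ = Σ_{k<n} a_k [Tⁿ] P(T)^k`, because `P(T)ⁿ` starts with `πⁿ Tⁿ`.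
Since `‖π - πⁿ‖ = ‖π‖ ≠ 0` for `n ≥ 2`, this recursion determines `aₙ` from `a₀ = 0` and `a₁ = 1`.
Multiplying it by `π^{n-2}` and using that the ultrametric norm of a sum is at most the largest norm
of its terms, the bounds `‖π^{k-1} a_k‖ ≤ 1` for `k < n` give `‖π^{n-1} aₙ‖ ≤ 1`.
-/

open PowerSeries

/-- Formal substitution `f(g)` of a power series `g` with zero constant term into a power
series `f`. -/
noncomputable def PowerSeries.comp {R : Type*} [CommRing R] (f g : PowerSeries R) :
    PowerSeries R :=
  PowerSeries.mk fun n => ∑ k ∈ Finset.range (n + 1), coeff k f * coeff n (g ^ k)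

theorem IsUltrametricDist.norm_one_sub_eq_one {R : Type*} [NormedRing R] [NormOneClass R]
    [IsUltrametricDist R] {x : R} (hx : ‖x‖ < 1) : ‖1 - x‖ = 1 := by
  rw [sub_eq_add_neg, norm_add_eq_max_of_norm_ne_norm (by simpa using hx.ne'), norm_neg,
    norm_one, max_eq_left hx.le]

theorem IsUltrametricDist.norm_sub_pow_eq_norm {K : Type*} [NormedField K] [IsUltrametricDist K]
    {x : K} (hx : ‖x‖ < 1) {n : ℕ} (hn : 2 ≤ n) : ‖x - x ^ n‖ = ‖x‖ := by
  obtain ⟨m, rfl⟩ := Nat.exists_eq_add_of_le' (show 1 ≤ n by omega)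
  have hxm : ‖x ^ m‖ < 1 := by rw [norm_pow]; exact pow_lt_one₀ (norm_nonneg x) hx (by omega)
  rw [pow_succ', ← mul_one_sub, norm_mul, norm_one_sub_eq_one hxm, mul_one]

theorem IsUltrametricDist.pow_ne_self {K : Type*} [NormedField K] [IsUltrametricDist K] {x : K}
    (hx0 : x ≠ 0) (hx : ‖x‖ < 1) {n : ℕ} (hn : 2 ≤ n) : x ^ n ≠ x := fun h =>
  hx0 <| norm_eq_zero.mp <| by rw [← norm_sub_pow_eq_norm hx hn, h, sub_self, norm_zero]

namespace PowerSeries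

section CommRing

variable {R : Type*} [CommRing R] {P : R⟦X⟧}

theorem coeff_comp (A P : R⟦X⟧) (n : ℕ) :
    coeff n (A.comp P) = ∑ k ∈ Finset.range (n + 1), coeff k A * coeff n (P ^ k) :=
  coeff_mk _ _

theorem coeff_pow_self_of_constantCoeff_eq_zero (hP : constantCoeff P = 0) (k : ℕ) :
    coeff k (P ^ k) = coeff 1 P ^ k := by
  obtain ⟨Q, rfl⟩ := X_dvd_iff.mpr hP
  simp [mul_pow, coeff_X_pow_mul']

theorem comp_eq_C_mul_iff (hP : constantCoeff P = 0) {A : R⟦X⟧} :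
    A.comp P = C (coeff 1 P) * A ↔ ∀ n, (coeff 1 P - coeff 1 P ^ n) * coeff n A =
      ∑ k ∈ Finset.range n, coeff k A * coeff n (P ^ k) := by
  refine PowerSeries.ext_iff.trans (forall_congr' fun n => ?_)
  rw [coeff_comp, coeff_C_mul, Finset.sum_range_succ, coeff_pow_self_of_constantCoeff_eq_zero hP]
  constructor <;> intro h <;> linear_combination -h

end CommRing

section Field

variable {K : Type*} [Field K] {P : K⟦X⟧}

noncomputable def logarithmCoeff (P : K⟦X⟧) : ℕ → K
  | 0 => 0
  | 1 => 1
  | n + 2 => (∑ k : Fin (n + 2), logarithmCoeff P k * coeff (n + 2) (P ^ (k : ℕ))) /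
      (coeff 1 P - coeff 1 P ^ (n + 2))

noncomputable def logarithm (P : K⟦X⟧) : K⟦X⟧ :=
  mk (logarithmCoeff P)

@[simp]
theorem constantCoeff_logarithm : constantCoeff (logarithm P) = 0 := by
  rw [← coeff_zero_eq_constantCoeff_apply, logarithm, coeff_mk, logarithmCoeff]

@[simp]
theorem coeff_one_logarithm : coeff 1 (logarithm P) = 1 := by
  rw [logarithm, coeff_mk, logarithmCoeff]

theorem coeff_logarithm_add_two (n : ℕ) : coeff (n + 2) (logarithm P) =
    (∑ k ∈ Finset.range (n + 2), coeff k (logarithm P) * coeff (n + 2) (P ^ k)) /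
      (coeff 1 P - coeff 1 P ^ (n + 2)) := by
  simp only [logarithm, coeff_mk]
  rw [logarithmCoeff,
    Fin.sum_univ_eq_sum_range (fun k => logarithmCoeff P k * coeff (n + 2) (P ^ k))]

variable (hP : constantCoeff P = 0) (hπ : ∀ n, 2 ≤ n → coeff 1 P ^ n ≠ coeff 1 P)
include hP hπ

theorem logarithm_comp : (logarithm P).comp P = C (coeff 1 P) * logarithm P := by
  refine (comp_eq_C_mul_iff hP).mpr fun n => ?_
  match n with
  | 0 => simp
  | 1 => simp
  | n + 2 =>
    rw [coeff_logarithm_add_two, mul_div_cancel₀ _ (sub_ne_zero.mpr (hπ _ le_add_self).symm)]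

theorem eq_logarithm_of_comp_eq {A : K⟦X⟧} (hA0 : constantCoeff A = 0) (hA1 : coeff 1 A = 1)
    (hA : A.comp P = C (coeff 1 P) * A) : A = logarithm P := by
  ext n
  induction n using Nat.strong_induction_on with
  | _ n ih =>
    match n with
    | 0 => simp [hA0]
    | 1 => simp [hA1]
    | n + 2 =>
      rw [coeff_logarithm_add_two, eq_div_iff (sub_ne_zero.mpr (hπ _ le_add_self).symm), mul_comm,
        (comp_eq_C_mul_iff hP).mp hA]
      exact Finset.sum_congr rfl fun k hk => by rw [ih k (Finset.mem_range.mp hk)]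

end Field

section Ultrametric

theorem norm_coeff_pow_le_one {R : Type*} [NormedCommRing R] [NormOneClass R]
    [IsUltrametricDist R] {P : R⟦X⟧} (hP : ∀ n, ‖coeff n P‖ ≤ 1) (k n : ℕ) :
    ‖coeff n (P ^ k)‖ ≤ 1 := by
  induction k generalizing n with
  | zero => rw [pow_zero, coeff_one]; split_ifs <;> simp
  | succ k ih =>
    rw [pow_succ, coeff_mul]
    refine IsUltrametricDist.norm_sum_le_of_forall_le_of_nonneg zero_le_one fun ij _ => ?_
    exact (norm_mul_le _ _).trans (mul_le_one₀ (ih _) (norm_nonneg _) (hP _))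

variable {K : Type*} [NormedField K] [IsUltrametricDist K] {P : K⟦X⟧}

theorem norm_pow_mul_coeff_le_one_of_comp_eq (hPint : ∀ n, ‖coeff n P‖ ≤ 1)
    (hP0 : constantCoeff P = 0) (hπ : ‖coeff 1 P‖ < 1) {A : K⟦X⟧} (hA0 : constantCoeff A = 0)
    (hA1 : coeff 1 A = 1) (hA : A.comp P = C (coeff 1 P) * A) (k : ℕ) (hk : 1 ≤ k) :
    ‖coeff 1 P ^ (k - 1) * coeff k A‖ ≤ 1 := by
  set π := coeff 1 P
  rw [norm_mul, norm_pow]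
  induction k using Nat.strong_induction_on with
  | _ k ih =>
    obtain _ | _ | m := k
    · omega
    · simp [hA1]
    have hrec := (comp_eq_C_mul_iff hP0).mp hA (m + 2)
    set S := ∑ k ∈ Finset.range (m + 2), coeff k A * coeff (m + 2) (P ^ k) with hS
    have hnorm : ‖π‖ * ‖coeff (m + 2) A‖ = ‖S‖ := by
      rw [← hrec, norm_mul, IsUltrametricDist.norm_sub_pow_eq_norm hπ le_add_self]
    have hsum : ‖π ^ m * S‖ ≤ 1 := by
      rw [hS, Finset.mul_sum]
      refine IsUltrametricDist.norm_sum_le_of_forall_le_of_nonneg zero_le_one fun j hj => ?_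
      obtain _ | j := j
      · simp [hA0]
      have hj : j ≤ m := by simp at hj; omega
      rw [norm_mul, norm_mul, norm_pow]
      calc ‖π‖ ^ m * (‖coeff (j + 1) A‖ * ‖coeff (m + 2) (P ^ (j + 1))‖)
          ≤ ‖π‖ ^ j * (‖coeff (j + 1) A‖ * 1) :=
            mul_le_mul (pow_le_pow_of_le_one (norm_nonneg _) hπ.le hj)
              (mul_le_mul_of_nonneg_left (norm_coeff_pow_le_one hPint _ _) (norm_nonneg _))
              (by positivity) (by positivity)
        _ ≤ 1 := by simpa using ih (j + 1) (by omega) (by omega)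
    calc ‖π‖ ^ (m + 2 - 1) * ‖coeff (m + 2) A‖
        = ‖π‖ ^ m * (‖π‖ * ‖coeff (m + 2) A‖) := by
          rw [show m + 2 - 1 = m + 1 by omega, pow_succ, mul_assoc]
      _ ≤ 1 := by rwa [hnorm, ← norm_pow, ← norm_mul]

end Ultrametric

end PowerSeries

theorem existsUnique_logarithm_general
    (E : Type*) [NormedField E] [IsUltrametricDist E]
    (P : PowerSeries E) (hPint : ∀ n, ‖coeff n P‖ ≤ 1)
    (hP0 : constantCoeff P = 0)
    (hπ1 : coeff 1 P ≠ 0) (hπ1m : ‖coeff 1 P‖ < 1) :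
    (∃! A : PowerSeries E, constantCoeff A = 0 ∧ coeff 1 A = 1 ∧
        A.comp P = C (coeff 1 P) * A) ∧
      ∀ A : PowerSeries E, constantCoeff A = 0 → coeff 1 A = 1 →
        A.comp P = C (coeff 1 P) * A →
        ∀ k : ℕ, 1 ≤ k → ‖(coeff 1 P) ^ (k - 1) * coeff k A‖ ≤ 1 := by
  have hpow : ∀ n, 2 ≤ n → coeff 1 P ^ n ≠ coeff 1 P :=
    fun _ => IsUltrametricDist.pow_ne_self hπ1 hπ1m
  refine ⟨⟨logarithm P, ⟨constantCoeff_logarithm, coeff_one_logarithm, logarithm_comp hP0 hpow⟩,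
    fun A ⟨hA0, hA1, hA⟩ => eq_logarithm_of_comp_eq hP0 hpow hA0 hA1 hA⟩,
    fun A hA0 hA1 hA => norm_pow_mul_coeff_le_one_of_comp_eq hPint hP0 hπ1m hA0 hA1 hA⟩

/-- Let `P = Σ_{k≥1} π_k T^k ∈ 𝒪_E[[T]]` with `π₁ ≠ 0` and `π₁ ∈ 𝔪_E`.
Then there is a unique `A = Σ_{k≥1} a_k T^k ∈ E[[T]]` with zero constant term, `a₁ = 1` and
`A(P(T)) = π₁·A(T)`; moreover `π₁^{k-1}·a_k ∈ 𝒪_E` for all `k ≥ 1`. -/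
theorem existsUnique_logarithm
    {p : ℕ} [Fact p.Prime] (E : Type*) [NormedField E] [IsUltrametricDist E]
    [NormedAlgebra ℚ_[p] E] [FiniteDimensional ℚ_[p] E]
    (P : PowerSeries E) (hPint : ∀ n, ‖coeff n P‖ ≤ 1)
    (hP0 : constantCoeff P = 0)
    (hπ1 : coeff 1 P ≠ 0) (hπ1m : ‖coeff 1 P‖ < 1) :
    (∃! A : PowerSeries E, constantCoeff A = 0 ∧ coeff 1 A = 1 ∧
        A.comp P = C (coeff 1 P) * A) ∧
      ∀ A : PowerSeries E, constantCoeff A = 0 → coeff 1 A = 1 →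
        A.comp P = C (coeff 1 P) * A →
        ∀ k : ℕ, 1 ≤ k → ‖(coeff 1 P) ^ (k - 1) * coeff k A‖ ≤ 1 :=
  existsUnique_logarithm_general E P hPint hP0 hπ1 hπ1m
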